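/- Let g, Ric : ℝ → Matrix (Fin n) (Fin n) ℝ with g differentiable, det g(t) > 0 for all t, and suppose g satisfies the Ricci flow equation g'(t) = −2 · Ric(t) for all t. Then the derivative at t of the function t ↦ Real.log (Real.sqrt (det g(t))) equals − trace((g(t))⁻¹ * Ric(t)); that is, d/dt log √g = −R, where R is the scalar curvature trace(g⁻¹ Ric). -/

import Mathlib

/-!
Jacobi's formula: the determinant is multilinear in the rows, so by the product rule the
derivative of `det g` is `∑ i, det (g with row i replaced by g'ᵢ) = tr (adj g * g')`.
Dividing by `det g` gives `(log det g)' = tr (g⁻¹ * g')`, and `log √(det g) = ½ log det g`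
together with `g' = -2 Ric` turns this into `-tr (g⁻¹ * Ric)`.
-/

open Matrix

namespace Matrix

variable {n : Type*} [Fintype n] [DecidableEq n]

theorem det_updateRow_eq_sum_adjugate {R : Type*} [CommRing R] (A : Matrix n n R) (i : n)
    (b : n → R) : (A.updateRow i b).det = ∑ j, adjugate A j i * b j := by
  rw [← cramer_transpose_apply, cramer_eq_adjugate_mulVec, mulVec, ← adjugate_transpose]
  simp [dotProduct, mul_comm]

theorem sum_det_updateRow_eq_trace_adjugate_mul {R : Type*} [CommRing R] (A B : Matrix n n R) :
    ∑ i, (A.updateRow i (B i)).det = trace (adjugate A * B) := by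
  simp only [det_updateRow_eq_sum_adjugate, trace, diag, mul_apply]
  exact Finset.sum_comm

variable {𝕜 : Type*} [NontriviallyNormedField 𝕜]

def detRowContinuousMultilinearMap : ContinuousMultilinearMap 𝕜 (fun _ : n => n → 𝕜) 𝕜 :=
  ⟨detRowAlternating.toMultilinearMap, continuous_id.matrix_det⟩

@[simp]
theorem detRowContinuousMultilinearMap_apply (v : n → n → 𝕜) :
    detRowContinuousMultilinearMap v = det v :=
  rfl

theorem hasDerivAt_det {g : 𝕜 → Matrix n n 𝕜} {g' : Matrix n n 𝕜} {t : 𝕜}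
    (h : ∀ i j, HasDerivAt (fun s => g s i j) (g' i j) t) :
    HasDerivAt (fun s => (g s).det) (trace (adjugate (g t) * g')) t := by
  have hrow (i : n) : HasFDerivAt (fun s => g s i) ((1 : 𝕜 →L[𝕜] 𝕜).smulRight (g' i)) t :=
    (hasDerivAt_pi.2 (h i)).hasFDerivAt
  have := (HasFDerivAt.multilinear_comp (f := detRowContinuousMultilinearMap) hrow).hasDerivAt
  rw [← sum_det_updateRow_eq_trace_adjugate_mul]
  simp only [detRowContinuousMultilinearMap_apply, _root_.sum_apply,
    ContinuousLinearMap.comp_apply, ContinuousLinearMap.smulRight_apply, one_apply_eq_self,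
    one_smul, ContinuousMultilinearMap.toContinuousLinearMap_apply] at this
  exact this

theorem hasDerivAt_log_det {g : ℝ → Matrix n n ℝ} {g' : Matrix n n ℝ} {t : ℝ}
    (h : ∀ i j, HasDerivAt (fun s => g s i j) (g' i j) t) (hdet : (g t).det ≠ 0) :
    HasDerivAt (fun s => Real.log (g s).det) (trace ((g t)⁻¹ * g')) t := by
  convert (hasDerivAt_det h).log hdet using 1
  rw [inv_def, Ring.inverse_eq_inv', smul_mul, trace_smul, smul_eq_mul, div_eq_inv_mul]

end Matrix

/-- Under the Ricci flow `g' = −2 Ric`, the derivative of `log √(det g)` equals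
`−trace (g⁻¹ Ric) = −R`, the negative of the scalar curvature. -/
theorem deriv_log_sqrt_det_ricci_flow (n : ℕ)
    (g Ric : ℝ → Matrix (Fin n) (Fin n) ℝ)
    (hg : ∀ i j : Fin n, Differentiable ℝ (fun t => g t i j))
    (hdet : ∀ t : ℝ, 0 < (g t).det)
    (hflow : ∀ (t : ℝ) (i j : Fin n), deriv (fun s => g s i j) t = -2 * Ric t i j)
    (t : ℝ) :
    deriv (fun s => Real.log (Real.sqrt (g s).det)) t
      = -Matrix.trace ((g t)⁻¹ * Ric t) := by
  have hentries (i j : Fin n) : HasDerivAt (fun s => g s i j) (((-2 : ℝ) • Ric t) i j) t := by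
    simpa [hflow] using (hg i j t).hasDerivAt
  have hlog_sqrt :
      (fun s => Real.log (Real.sqrt (g s).det)) = fun s => Real.log (g s).det / 2 :=
    funext fun s => Real.log_sqrt (hdet s).le
  rw [hlog_sqrt, deriv_div_const, (hasDerivAt_log_det hentries (hdet t).ne').deriv,
    Matrix.mul_smul, trace_smul, smul_eq_mul]
  ring
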